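/- arXiv:2401.09263 — 2 statements merged into one kernel-verified Lean document; each statement's English description precedes it below -/
import Mathlib

section
/- For every α > 0 and θ₂ ≥ θ₁ > 0 there exist constants μ₁, μ₂ ∈ (0,1) depending only on α, θ₁, θ₂ such that the following holds. Let A be an N×n random matrix whose entries are independent α-exponential random variables with parameters θ₁, θ₂. Then for every unit vector x ∈ ℝⁿ (‖x‖₂ = 1), P{‖Ax‖₂ < μ₁·√N} ≤ μ₂^N. -/
open MeasureTheory ProbabilityTheory Real

/-- The spectral norm (ℓ₂ operator norm) of a rectangular real matrix. -/
noncomputable def specNorm {m n : ℕ} (A : Matrix (Fin m) (Fin n) ℝ) : ℝ :=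
  ⨆ x : {x : EuclideanSpace ℝ (Fin n) // ‖x‖ = 1},
    ‖(EuclideanSpace.equiv (Fin m) ℝ).symm (A.mulVec (EuclideanSpace.equiv (Fin n) ℝ x.1))‖

/-- The symmetric matrix with entries `b i j * u i j` for `j ≤ i`. -/
noncomputable def symMatrix {n : ℕ} (b u : Fin n → Fin n → ℝ) : Matrix (Fin n) (Fin n) ℝ :=
  fun i j => if j ≤ i then b i j * u i j else b j i * u j i

/-- `max_{i ≥ j} b_{ij}`. -/
noncomputable def maxB {n : ℕ} (b : Fin n → Fin n → ℝ) : ℝ :=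
  ⨆ q : {q : Fin n × Fin n // q.2 ≤ q.1}, b q.1.1 q.1.2

/-- `ξ` is α-exponential with parameters `θ₁ ≤ θ₂`: it is centered and
`θ₁ p^{1/α} ≤ (E|ξ|^p)^{1/p} ≤ θ₂ p^{1/α}` for all `p ≥ 1`. -/
def IsAlphaExp {Ω : Type*} [MeasurableSpace Ω] (μ : Measure Ω) (α θ₁ θ₂ : ℝ)
    (ξ : Ω → ℝ) : Prop :=
  (∫ ω, ξ ω ∂μ) = 0 ∧
  ∀ p : ℝ, 1 ≤ p →
    θ₁ * p ^ (1 / α) ≤ (∫ ω, |ξ ω| ^ p ∂μ) ^ (1 / p) ∧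
    (∫ ω, |ξ ω| ^ p ∂μ) ^ (1 / p) ≤ θ₂ * p ^ (1 / α)



lemma iIndepFun_precomp {Ω ι ι' β : Type*} [MeasurableSpace Ω] {μ : Measure Ω}
    {mβ : MeasurableSpace β} {f : ι → Ω → β}
    (hf : iIndepFun f μ) {g : ι' → ι} (hg : Function.Injective g) :
    iIndepFun (fun i => f (g i)) μ := by
  classical
  rw [iIndepFun_iff_measure_inter_preimage_eq_mul] at hf ⊢
  intro S sets hsets
  have key := hf (S.image g)
      (sets := fun i => Function.extend g sets (fun _ => Set.univ) i)
      (fun i hi => by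
        rcases Finset.mem_image.1 hi with ⟨j, hj, rfl⟩
        simpa only [hg.extend_apply] using hsets j hj)
  calc μ (⋂ j ∈ S, f (g j) ⁻¹' sets j)
      = μ (⋂ i ∈ S.image g, f i ⁻¹' Function.extend g sets (fun _ => Set.univ) i) := by
        congr 1
        ext ω
        simp only [Set.mem_iInter, Finset.mem_image]
        constructor
        · rintro h i ⟨j, hj, rfl⟩
          rw [hg.extend_apply]
          exact h j hj
        · intro h j hj
          have := h (g j) ⟨j, hj, rfl⟩
          rwa [hg.extend_apply] at this
    _ = ∏ i ∈ S.image g, μ (f i ⁻¹' Function.extend g sets (fun _ => Set.univ) i) := key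
    _ = ∏ j ∈ S, μ (f (g j) ⁻¹' sets j) := by
        rw [Finset.prod_image (fun a _ b _ h => hg h)]
        exact Finset.prod_congr rfl fun j _ => by rw [hg.extend_apply]

lemma alphaExp_moments {Ω : Type*} [MeasurableSpace Ω] {μ : Measure Ω}
    {α θ₁ θ₂ : ℝ} (hα : 0 < α) (hθ₁ : 0 < θ₁) {ξ : Ω → ℝ}
    (hm : Measurable ξ) (h : IsAlphaExp μ α θ₁ θ₂ ξ) :
    (∀ k : ℕ, 1 ≤ k → Integrable (fun ω => ξ ω ^ k) μ) ∧
    (θ₁ * (2:ℝ) ^ (1/α)) ^ 2 ≤ (∫ ω, ξ ω ^ 2 ∂μ) ∧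
    (∫ ω, ξ ω ^ 2 ∂μ) ≤ (θ₂ * (2:ℝ) ^ (1/α)) ^ 2 ∧
    (∫ ω, ξ ω ^ 4 ∂μ) ≤ (θ₂ * (4:ℝ) ^ (1/α)) ^ 4 := by
  -- integrability of |ξ|^p for real p ≥ 1
  have habs : ∀ p : ℝ, 1 ≤ p → Integrable (fun ω => |ξ ω| ^ p) μ := by
    intro p hp
    by_contra hni
    have h0 : (∫ ω, |ξ ω| ^ p ∂μ) = 0 := integral_undef hni
    have hlo := (h.2 p hp).1
    rw [h0, Real.zero_rpow (one_div_ne_zero (by positivity))] at hlo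
    have : (0:ℝ) < θ₁ * p ^ (1/α) := by positivity
    linarith
  have hint : ∀ k : ℕ, 1 ≤ k → Integrable (fun ω => ξ ω ^ k) μ := by
    intro k hk
    have h1 : Integrable (fun ω => |ξ ω| ^ (k:ℝ)) μ := habs k (by exact_mod_cast hk)
    have h2 : Integrable (fun ω => |ξ ω| ^ k) μ := by
      simpa only [Real.rpow_natCast] using h1
    refine h2.mono' (hm.pow_const k).aestronglyMeasurable ?_
    filter_upwards with ω
    simp [abs_pow]
  refine ⟨hint, ?_, ?_, ?_⟩
  · -- lower bound on second moment
    have heq : (∫ ω, |ξ ω| ^ (2:ℝ) ∂μ) = ∫ ω, ξ ω ^ 2 ∂μ := by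
      have habs2 : ∀ t : ℝ, |t| ^ (2:ℝ) = t ^ 2 := fun t => by
        rw [show (2:ℝ) = ((2:ℕ):ℝ) by norm_num, Real.rpow_natCast, sq_abs]
      simp only [habs2]
    have hlo := (h.2 2 one_le_two).1
    rw [heq] at hlo
    have hnn : 0 ≤ ∫ ω, ξ ω ^ 2 ∂μ := integral_nonneg fun ω => sq_nonneg _
    have hsq : ((∫ ω, ξ ω ^ 2 ∂μ) ^ (1/(2:ℝ))) ^ 2 = ∫ ω, ξ ω ^ 2 ∂μ := by
      rw [← Real.rpow_natCast (_ ^ (1/(2:ℝ))) 2, ← Real.rpow_mul hnn]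
      norm_num
    calc (θ₁ * (2:ℝ) ^ (1/α)) ^ 2 ≤ ((∫ ω, ξ ω ^ 2 ∂μ) ^ (1/(2:ℝ))) ^ 2 := by
          apply pow_le_pow_left₀ (by positivity) hlo
      _ = _ := hsq
  · have heq : (∫ ω, |ξ ω| ^ (2:ℝ) ∂μ) = ∫ ω, ξ ω ^ 2 ∂μ := by
      have habs2 : ∀ t : ℝ, |t| ^ (2:ℝ) = t ^ 2 := fun t => by
        rw [show (2:ℝ) = ((2:ℕ):ℝ) by norm_num, Real.rpow_natCast, sq_abs]
      simp only [habs2]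
    have hhi := (h.2 2 one_le_two).2
    rw [heq] at hhi
    have hnn : 0 ≤ ∫ ω, ξ ω ^ 2 ∂μ := integral_nonneg fun ω => sq_nonneg _
    have hsq : ((∫ ω, ξ ω ^ 2 ∂μ) ^ (1/(2:ℝ))) ^ 2 = ∫ ω, ξ ω ^ 2 ∂μ := by
      rw [← Real.rpow_natCast (_ ^ (1/(2:ℝ))) 2, ← Real.rpow_mul hnn]
      norm_num
    calc (∫ ω, ξ ω ^ 2 ∂μ) = ((∫ ω, ξ ω ^ 2 ∂μ) ^ (1/(2:ℝ))) ^ 2 := hsq.symm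
      _ ≤ (θ₂ * (2:ℝ) ^ (1/α)) ^ 2 := by
          apply pow_le_pow_left₀ (Real.rpow_nonneg hnn _) hhi
  · have heq : (∫ ω, |ξ ω| ^ (4:ℝ) ∂μ) = ∫ ω, ξ ω ^ 4 ∂μ := by
      have habs4 : ∀ t : ℝ, |t| ^ (4:ℝ) = t ^ 4 := fun t => by
        rw [show (4:ℝ) = ((4:ℕ):ℝ) by norm_num, Real.rpow_natCast, pow_abs,
          abs_of_nonneg (by positivity)]
      simp only [habs4]
    have hhi := (h.2 4 (by norm_num)).2
    rw [heq] at hhi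
    have hnn : 0 ≤ ∫ ω, ξ ω ^ 4 ∂μ := integral_nonneg fun ω => by positivity
    have hsq : ((∫ ω, ξ ω ^ 4 ∂μ) ^ (1/(4:ℝ))) ^ 4 = ∫ ω, ξ ω ^ 4 ∂μ := by
      rw [← Real.rpow_natCast (_ ^ (1/(4:ℝ))) 4, ← Real.rpow_mul hnn]
      norm_num
    calc (∫ ω, ξ ω ^ 4 ∂μ) = ((∫ ω, ξ ω ^ 4 ∂μ) ^ (1/(4:ℝ))) ^ 4 := hsq.symm
      _ ≤ (θ₂ * (4:ℝ) ^ (1/α)) ^ 4 := by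
          apply pow_le_pow_left₀ (Real.rpow_nonneg hnn _) hhi

lemma row_moments {Ω : Type*} [MeasurableSpace Ω] {μ : Measure Ω} [IsProbabilityMeasure μ]
    {n : ℕ} {ξ : Fin n → Ω → ℝ} (hmeas : ∀ j, Measurable (ξ j))
    (hindep : iIndepFun ξ μ)
    {s0 B : ℝ} (hs0 : 0 ≤ s0) (hB : 0 ≤ B)
    (hint : ∀ j, ∀ k : ℕ, 1 ≤ k → Integrable (fun ω => ξ j ω ^ k) μ)
    (hmean : ∀ j, (∫ ω, ξ j ω ∂μ) = 0)
    (h2lo : ∀ j, s0 ≤ ∫ ω, ξ j ω ^ 2 ∂μ)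
    (h2hi : ∀ j, (∫ ω, ξ j ω ^ 2 ∂μ) ≤ B)
    (h4 : ∀ j, (∫ ω, ξ j ω ^ 4 ∂μ) ≤ B ^ 2)
    (x : Fin n → ℝ) (s : Finset (Fin n)) :
    (∀ k : ℕ, k ≤ 4 → Integrable (fun ω => (∑ j ∈ s, x j * ξ j ω) ^ k) μ) ∧
    (∫ ω, (∑ j ∈ s, x j * ξ j ω) ∂μ) = 0 ∧
    s0 * (∑ j ∈ s, x j ^ 2) ≤ (∫ ω, (∑ j ∈ s, x j * ξ j ω) ^ 2 ∂μ) ∧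
    (∫ ω, (∑ j ∈ s, x j * ξ j ω) ^ 2 ∂μ) ≤ B * (∑ j ∈ s, x j ^ 2) ∧
    (∫ ω, (∑ j ∈ s, x j * ξ j ω) ^ 4 ∂μ) ≤ 3 * B ^ 2 * (∑ j ∈ s, x j ^ 2) ^ 2 := by
  classical
  induction s using Finset.induction_on with
  | empty =>
      refine ⟨fun k hk => ?_, by simp, by simp, by simp, by simp⟩
      simpa using (integrable_const ((0:ℝ) ^ k))
  | insert _ _ ha =>
      rename_i a s ih
      obtain ⟨ihI, ihm, ihlo, ihhi, ih4⟩ := ih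
      simp only [Finset.sum_insert ha]
      set S : Ω → ℝ := fun ω => ∑ j ∈ s, x j * ξ j ω with hSdef
      set w : Ω → ℝ := fun ω => x a * ξ a ω with hwdef
      set σ2 : ℝ := ∑ j ∈ s, x j ^ 2 with hσdef
      have hσ2 : 0 ≤ σ2 := Finset.sum_nonneg fun j _ => sq_nonneg _
      have hSmeas : Measurable S := Finset.measurable_sum _ fun j _ => (hmeas j).const_mul (x j)
      have hwmeas : Measurable w := (hmeas a).const_mul (x a)
      have hIw : ∀ k : ℕ, 1 ≤ k → Integrable (fun ω => w ω ^ k) μ := by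
        intro k hk
        have := (hint a k hk).const_mul (x a ^ k)
        simpa [hwdef, mul_pow] using this
      -- independence of S and w
      have hind' : iIndepFun
          (fun j => fun ω => x j * ξ j ω) μ :=
        hindep.comp (fun j => fun y => x j * y) (fun j => measurable_id.const_mul (x j))
      have hSw : IndepFun S w μ := by
        have h0 := hind'.indepFun_finsetSum_of_notMem
          (fun j => (hmeas j).const_mul (x j)) ha
        have hsum_eq : (∑ j ∈ s, (fun ω => x j * ξ j ω)) = S := by
          funext ω; simp [hSdef, Finset.sum_apply]
        rwa [hsum_eq] at h0
      have hSkwl : ∀ k l : ℕ, IndepFun (fun ω => S ω ^ k) (fun ω => w ω ^ l) μ :=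
        fun k l => hSw.comp (measurable_id.pow_const k) (measurable_id.pow_const l)
      have hIprod : ∀ k l : ℕ, k ≤ 4 → 1 ≤ l →
          Integrable (fun ω => S ω ^ k * w ω ^ l) μ := by
        intro k l hk hl
        have := (hSkwl k l).integrable_mul (ihI k hk) (hIw l hl)
        simpa [Pi.mul_def] using this
      have hEprod : ∀ k l : ℕ, (∫ ω, S ω ^ k * w ω ^ l ∂μ)
          = (∫ ω, S ω ^ k ∂μ) * ∫ ω, w ω ^ l ∂μ :=
        fun k l => (hSkwl k l).integral_mul_eq_mul_integral
          ((hSmeas.pow_const k).aestronglyMeasurable)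
          ((hwmeas.pow_const l).aestronglyMeasurable)
      -- moments of w
      have hEw : (∫ ω, w ω ∂μ) = 0 := by
        simp [hwdef, integral_const_mul, hmean a]
      have hEw2hi : (∫ ω, w ω ^ 2 ∂μ) ≤ B * x a ^ 2 := by
        have : (∫ ω, w ω ^ 2 ∂μ) = x a ^ 2 * ∫ ω, ξ a ω ^ 2 ∂μ := by
          simp [hwdef, mul_pow, integral_const_mul]
        rw [this, mul_comm B _]
        exact mul_le_mul_of_nonneg_left (h2hi a) (sq_nonneg _)
      have hEw2lo : s0 * x a ^ 2 ≤ (∫ ω, w ω ^ 2 ∂μ) := by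
        have : (∫ ω, w ω ^ 2 ∂μ) = x a ^ 2 * ∫ ω, ξ a ω ^ 2 ∂μ := by
          simp [hwdef, mul_pow, integral_const_mul]
        rw [this, mul_comm s0 _]
        exact mul_le_mul_of_nonneg_left (h2lo a) (sq_nonneg _)
      have hEw2nn : 0 ≤ ∫ ω, w ω ^ 2 ∂μ := integral_nonneg fun ω => sq_nonneg _
      have hEw4 : (∫ ω, w ω ^ 4 ∂μ) ≤ B ^ 2 * (x a ^ 2) ^ 2 := by
        have : (∫ ω, w ω ^ 4 ∂μ) = x a ^ 4 * ∫ ω, ξ a ω ^ 4 ∂μ := by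
          simp [hwdef, mul_pow, integral_const_mul]
        rw [this, mul_comm (B^2) _]
        calc x a ^ 4 * ∫ ω, ξ a ω ^ 4 ∂μ ≤ x a ^ 4 * B ^ 2 :=
              mul_le_mul_of_nonneg_left (h4 a) (by positivity)
          _ = (x a ^ 2) ^ 2 * B ^ 2 := by ring
      -- pieces about S (rewritten with pow_one)
      have hIS1 : Integrable S μ := by simpa using ihI 1 (by norm_num)
      have hIw1 : Integrable w μ := by simpa using hIw 1 le_rfl
      have hES : (∫ ω, S ω ∂μ) = 0 := ihm
      have hES2nn : 0 ≤ ∫ ω, S ω ^ 2 ∂μ := integral_nonneg fun ω => sq_nonneg _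
      -- integral of cross terms
      have hX11 : (∫ ω, S ω ^ 1 * w ω ^ 1 ∂μ) = 0 := by
        rw [hEprod 1 1]; simp [pow_one, hES, hEw]
      have hX31 : (∫ ω, S ω ^ 3 * w ω ^ 1 ∂μ) = 0 := by
        rw [hEprod 3 1]; simp [pow_one, hEw]
      have hX13 : (∫ ω, S ω ^ 1 * w ω ^ 3 ∂μ) = 0 := by
        rw [hEprod 1 3]; simp [pow_one, hES]
      -- second moment identity
      have hsum2 : (∫ ω, (w ω + S ω) ^ 2 ∂μ)
          = (∫ ω, w ω ^ 2 ∂μ) + ∫ ω, S ω ^ 2 ∂μ := by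
        have e2 : (fun ω => (w ω + S ω) ^ 2)
            = fun ω => w ω ^ 2 + (2 * (S ω ^ 1 * w ω ^ 1) + S ω ^ 2) := by
          funext ω; ring
        have iB : Integrable (fun ω => 2 * (S ω ^ 1 * w ω ^ 1)) μ :=
          (hIprod 1 1 (by norm_num) le_rfl).const_mul 2
        have iC : Integrable (fun ω => S ω ^ 2) μ := ihI 2 (by norm_num)
        have iBC : Integrable (fun ω => 2 * (S ω ^ 1 * w ω ^ 1) + S ω ^ 2) μ := iB.add iC
        rw [e2, integral_add (hIw 2 one_le_two) iBC, integral_add iB iC,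
          integral_const_mul, hX11]
        ring
      have hsum4 : (∫ ω, (w ω + S ω) ^ 4 ∂μ)
          = (∫ ω, w ω ^ 4 ∂μ) + 6 * ((∫ ω, S ω ^ 2 ∂μ) * (∫ ω, w ω ^ 2 ∂μ))
            + ∫ ω, S ω ^ 4 ∂μ := by
        have e4 : (fun ω => (w ω + S ω) ^ 4)
            = fun ω => w ω ^ 4 + (4 * (S ω ^ 1 * w ω ^ 3) + (6 * (S ω ^ 2 * w ω ^ 2)
              + (4 * (S ω ^ 3 * w ω ^ 1) + S ω ^ 4))) := by
          funext ω; ring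
        have i13 : Integrable (fun ω => 4 * (S ω ^ 1 * w ω ^ 3)) μ :=
          (hIprod 1 3 (by norm_num) (by norm_num)).const_mul 4
        have i22 : Integrable (fun ω => 6 * (S ω ^ 2 * w ω ^ 2)) μ :=
          (hIprod 2 2 (by norm_num) (by norm_num)).const_mul 6
        have i31 : Integrable (fun ω => 4 * (S ω ^ 3 * w ω ^ 1)) μ :=
          (hIprod 3 1 (by norm_num) (by norm_num)).const_mul 4
        have i4 : Integrable (fun ω => S ω ^ 4) μ := ihI 4 le_rfl
        have i314 : Integrable (fun ω => 4 * (S ω ^ 3 * w ω ^ 1) + S ω ^ 4) μ := i31.add i4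
        have i2234 : Integrable (fun ω => 6 * (S ω ^ 2 * w ω ^ 2)
            + (4 * (S ω ^ 3 * w ω ^ 1) + S ω ^ 4)) μ := i22.add i314
        have iall : Integrable (fun ω => 4 * (S ω ^ 1 * w ω ^ 3) + (6 * (S ω ^ 2 * w ω ^ 2)
            + (4 * (S ω ^ 3 * w ω ^ 1) + S ω ^ 4))) μ := i13.add i2234
        rw [e4, integral_add (hIw 4 (by norm_num)) iall,
          integral_add i13 i2234, integral_add i22 i314,
          integral_add i31 i4, integral_const_mul, integral_const_mul, integral_const_mul,
          hX13, hX31, hEprod 2 2]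
        ring
      -- integrability of powers of the new sum
      have hIsum : ∀ k : ℕ, k ≤ 4 → Integrable (fun ω => (w ω + S ω) ^ k) μ := by
        intro k hk
        interval_cases k
        · simpa using integrable_const (1:ℝ)
        · simp only [pow_one]; exact hIw1.add hIS1
        · have e2 : (fun ω => (w ω + S ω) ^ 2)
              = fun ω => w ω ^ 2 + (2 * (S ω ^ 1 * w ω ^ 1) + S ω ^ 2) := by
            funext ω; ring
          rw [e2]
          exact (hIw 2 one_le_two).add
            (((hIprod 1 1 (by norm_num) le_rfl).const_mul 2).add (ihI 2 (by norm_num)))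
        · have e3 : (fun ω => (w ω + S ω) ^ 3)
              = fun ω => w ω ^ 3 + (3 * (S ω ^ 1 * w ω ^ 2) + (3 * (S ω ^ 2 * w ω ^ 1)
                + S ω ^ 3)) := by
            funext ω; ring
          rw [e3]
          exact (hIw 3 (by norm_num)).add
            (((hIprod 1 2 (by norm_num) (by norm_num)).const_mul 3).add
              (((hIprod 2 1 (by norm_num) (by norm_num)).const_mul 3).add
                (ihI 3 (by norm_num))))
        · have e4 : (fun ω => (w ω + S ω) ^ 4)
              = fun ω => w ω ^ 4 + (4 * (S ω ^ 1 * w ω ^ 3) + (6 * (S ω ^ 2 * w ω ^ 2)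
                + (4 * (S ω ^ 3 * w ω ^ 1) + S ω ^ 4))) := by
            funext ω; ring
          rw [e4]
          exact (hIw 4 (by norm_num)).add
            (((hIprod 1 3 (by norm_num) (by norm_num)).const_mul 4).add
              (((hIprod 2 2 (by norm_num) (by norm_num)).const_mul 6).add
                (((hIprod 3 1 (by norm_num) (by norm_num)).const_mul 4).add (ihI 4 le_rfl))))
      refine ⟨hIsum, ?_, ?_, ?_, ?_⟩
      · rw [integral_add hIw1 hIS1, hES, hEw]; ring
      · rw [hsum2, mul_add]
        exact add_le_add hEw2lo ihlo
      · rw [hsum2, mul_add]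
        exact add_le_add hEw2hi ihhi
      · rw [hsum4]
        have hES2hi : (∫ ω, S ω ^ 2 ∂μ) ≤ B * σ2 := ihhi
        have hES4 : (∫ ω, S ω ^ 4 ∂μ) ≤ 3 * B ^ 2 * σ2 ^ 2 := ih4
        have hxa : (0:ℝ) ≤ x a ^ 2 := sq_nonneg _
        nlinarith [mul_le_mul hES2hi hEw2hi hEw2nn (by positivity : (0:ℝ) ≤ B * σ2),
          sq_nonneg (x a ^ 2 - σ2), sq_nonneg (x a ^ 2 + σ2), mul_nonneg hσ2 hxa,
          mul_nonneg hB (mul_nonneg hσ2 hxa), sq_nonneg B]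

lemma exp_le_lin (t : ℝ) (ht0 : 0 ≤ t) (ht1 : t ≤ 1) :
    Real.exp (-t) ≤ 1 - (1 - Real.exp (-1)) * t := by
  have hconv := convexOn_exp.2 (Set.mem_univ (0:ℝ)) (Set.mem_univ (-1:ℝ))
    (by linarith : (0:ℝ) ≤ 1 - t) ht0 (by ring)
  simp only [smul_eq_mul, mul_zero, mul_neg_one, zero_add, Real.exp_zero,
    mul_one] at hconv
  nlinarith [hconv]


set_option maxHeartbeats 2000000 in
theorem small_ball_Ax (α θ₁ θ₂ : ℝ) (hα : 0 < α) (hθ₁ : 0 < θ₁) (hθ : θ₁ ≤ θ₂) :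
    ∃ μ₁ μ₂ : ℝ, 0 < μ₁ ∧ μ₁ < 1 ∧ 0 < μ₂ ∧ μ₂ < 1 ∧
      ∀ (N n : ℕ),
      ∀ (Ω : Type) (_ : MeasurableSpace Ω) (μ : Measure Ω), IsProbabilityMeasure μ →
      ∀ ξ : Fin N → Fin n → Ω → ℝ,
        (∀ i j, Measurable (ξ i j)) →
        (∀ i j, IsAlphaExp μ α θ₁ θ₂ (ξ i j)) →
        iIndepFun
          (fun q : Fin N × Fin n => ξ q.1 q.2) μ →
      ∀ x : EuclideanSpace ℝ (Fin n), ‖x‖ = 1 →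
        (μ {ω | ‖(EuclideanSpace.equiv (Fin N) ℝ).symm
              (Matrix.mulVec (fun i j => ξ i j ω)
                (EuclideanSpace.equiv (Fin n) ℝ x))‖ < μ₁ * Real.sqrt N}).toReal
          ≤ μ₂ ^ N := by
  classical
  have hθ₂ : 0 < θ₂ := lt_of_lt_of_le hθ₁ hθ
  set s0 : ℝ := (θ₁ * (2:ℝ) ^ (1/α)) ^ 2 with hs0def
  set B : ℝ := (θ₂ * (4:ℝ) ^ (1/α)) ^ 2 with hBdef
  have hs0pos : 0 < s0 := by positivity
  have hBpos : 0 < B := by positivity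
  have hrpow24 : (2:ℝ) ^ (1/α) ≤ (4:ℝ) ^ (1/α) :=
    Real.rpow_le_rpow (by norm_num) (by norm_num) (by positivity)
  have hs0B : s0 ≤ B := by
    apply pow_le_pow_left₀ (by positivity)
    exact mul_le_mul hθ hrpow24 (by positivity) hθ₂.le
  have h2hiB : (θ₂ * (2:ℝ) ^ (1/α)) ^ 2 ≤ B := by
    apply pow_le_pow_left₀ (by positivity)
    exact mul_le_mul_of_nonneg_left hrpow24 hθ₂.le
  have hB2 : (θ₂ * (4:ℝ) ^ (1/α)) ^ 4 = B ^ 2 := by rw [hBdef, ← pow_mul]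
  set c2 : ℝ := 6 * B ^ 2 / s0 with hc2def
  have hc2pos : 0 < c2 := by positivity
  set lam : ℝ := 1 / c2 with hlamdef
  have hlampos : 0 < lam := by positivity
  set mlow : ℝ := s0 / 2 with hmlowdef
  have hmlowpos : 0 < mlow := by positivity
  have hexp1 : Real.exp (-1) < 1 := by
    have := Real.exp_lt_exp.2 (show (-1:ℝ) < 0 by norm_num)
    rwa [Real.exp_zero] at this
  set beta : ℝ := (1 - Real.exp (-1)) * (lam * mlow) with hbetadef
  have hbetapos : 0 < beta :=
    mul_pos (by linarith) (mul_pos hlampos hmlowpos)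
  set eps : ℝ := (1 - Real.exp (-1)) * mlow / 2 with hepsdef
  have hepspos : 0 < eps :=
    div_pos (mul_pos (by linarith) hmlowpos) two_pos
  have hlameps : lam * eps = beta / 2 := by
    rw [hepsdef, hbetadef]; ring
  refine ⟨min (Real.sqrt eps) (1/2), Real.exp (-(beta/2)),
    lt_min (Real.sqrt_pos.2 hepspos) (by norm_num),
    lt_of_le_of_lt (min_le_right _ _) (by norm_num),
    Real.exp_pos _, ?_, ?_⟩
  · have := Real.exp_lt_exp.2 (show -(beta/2) < 0 by linarith)
    rwa [Real.exp_zero] at this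
  intro N n Ω mΩ μ hprob ξ hmeas halpha hindep x hx
  haveI := hprob
  have hent := fun (i : Fin N) (j : Fin n) =>
    alphaExp_moments hα hθ₁ (hmeas i j) (halpha i j)
  set x' : Fin n → ℝ := ⇑(EuclideanSpace.equiv (Fin n) ℝ) x with hx'def
  have hxsum : ∑ j, x' j ^ 2 = 1 := by
    have hnn : 0 ≤ ∑ j, x' j ^ 2 := Finset.sum_nonneg fun j _ => sq_nonneg _
    have h1 : ‖x‖ = Real.sqrt (∑ j, x' j ^ 2) := by
      rw [EuclideanSpace.norm_eq]
      congr 1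
      refine Finset.sum_congr rfl fun j _ => ?_
      rw [Real.norm_eq_abs, sq_abs]
      rfl
    rw [hx] at h1
    calc ∑ j, x' j ^ 2 = Real.sqrt (∑ j, x' j ^ 2) ^ 2 := (Real.sq_sqrt hnn).symm
      _ = 1 := by rw [← h1]; norm_num
  have hrowind : ∀ i : Fin N, iIndepFun
      (fun j => ξ i j) μ := by
    intro i
    have hinj : Function.Injective (fun j : Fin n => ((i, j) : Fin N × Fin n)) := by
      intro a b h
      simpa using congrArg Prod.snd h
    exact iIndepFun_precomp hindep hinj
  have hrow := fun i : Fin N => row_moments (fun j => hmeas i j) (hrowind i)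
    hs0pos.le hBpos.le
    (fun j k hk => (hent i j).1 k hk)
    (fun j => (halpha i j).1)
    (fun j => (hent i j).2.1)
    (fun j => le_trans (hent i j).2.2.1 h2hiB)
    (fun j => by rw [← hB2]; exact (hent i j).2.2.2)
    x' Finset.univ
  set Y : Fin N → Ω → ℝ := fun i ω => ∑ j, x' j * ξ i j ω with hYdef
  set Z : Fin N → Ω → ℝ := fun i ω => min (Y i ω ^ 2) c2 with hZdef
  set g : Fin N → Ω → ℝ := fun i ω => Real.exp (-(lam * Z i ω)) with hgdef
  have hYmeas : ∀ i, Measurable (Y i) := fun i =>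
    Finset.measurable_sum _ fun j _ => (hmeas i j).const_mul _
  have hZmeas : ∀ i, Measurable (Z i) := fun i =>
    ((hYmeas i).pow_const 2).min measurable_const
  have hgmeas : ∀ i, Measurable (g i) := fun i =>
    (((hZmeas i).const_mul lam).neg).exp
  have hZ0 : ∀ i ω, 0 ≤ Z i ω := fun i ω => le_min (sq_nonneg _) hc2pos.le
  have hZc : ∀ i ω, Z i ω ≤ c2 := fun i ω => min_le_right _ _
  have hg0 : ∀ i ω, 0 < g i ω := fun i ω => Real.exp_pos _
  have hg1 : ∀ i ω, g i ω ≤ 1 := by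
    intro i ω
    have h1 : -(lam * Z i ω) ≤ 0 := neg_nonpos.2 (mul_nonneg hlampos.le (hZ0 i ω))
    have := Real.exp_le_exp.2 h1
    rwa [Real.exp_zero] at this
  have hgint : ∀ i, Integrable (g i) μ := by
    intro i
    refine (integrable_const (1:ℝ)).mono' (hgmeas i).aestronglyMeasurable ?_
    filter_upwards with ω
    rw [Real.norm_eq_abs, abs_of_pos (hg0 i ω)]
    exact hg1 i ω
  have hZint : ∀ i, Integrable (Z i) μ := by
    intro i
    refine (integrable_const c2).mono' (hZmeas i).aestronglyMeasurable ?_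
    filter_upwards with ω
    rw [Real.norm_eq_abs, abs_of_nonneg (hZ0 i ω)]
    exact hZc i ω
  have hEZ : ∀ i, mlow ≤ ∫ ω, Z i ω ∂μ := by
    intro i
    obtain ⟨hI, _, hlo, _, h4i⟩ := hrow i
    have hY2 : s0 ≤ ∫ ω, Y i ω ^ 2 ∂μ := by
      have := hlo
      rwa [hxsum, mul_one] at this
    have hY4 : (∫ ω, Y i ω ^ 4 ∂μ) ≤ 3 * B ^ 2 := by
      have := h4i
      rwa [hxsum, one_pow, mul_one] at this
    have hptw : ∀ ω, Y i ω ^ 2 - Y i ω ^ 4 / c2 ≤ Z i ω := by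
      intro ω
      rcases le_total (Y i ω ^ 2) c2 with h | h
      · have h0 : (0:ℝ) ≤ Y i ω ^ 4 / c2 := by positivity
        have : Z i ω = Y i ω ^ 2 := min_eq_left h
        rw [this]; linarith
      · have h1 : Y i ω ^ 2 ≤ Y i ω ^ 4 / c2 := by
          rw [le_div_iff₀ hc2pos]
          nlinarith [sq_nonneg (Y i ω)]
        have h2 : Z i ω = c2 := min_eq_right h
        rw [h2]; linarith
    have hIsub : Integrable (fun ω => Y i ω ^ 2 - Y i ω ^ 4 / c2) μ :=
      (hI 2 (by norm_num)).sub ((hI 4 le_rfl).div_const c2)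
    have hmono := integral_mono hIsub (hZint i) hptw
    rw [integral_sub (hI 2 (by norm_num)) ((hI 4 le_rfl).div_const c2),
      integral_div] at hmono
    have h34 : (∫ ω, Y i ω ^ 4 ∂μ) / c2 ≤ 3 * B ^ 2 / c2 := by gcongr
    have harith : 3 * B ^ 2 / c2 = s0 / 2 := by
      rw [hc2def]; field_simp; ring
    rw [hmlowdef]; linarith
  have hgle : ∀ i, (∫ ω, g i ω ∂μ) ≤ Real.exp (-beta) := by
    intro i
    have hptw : ∀ ω, g i ω ≤ 1 - (1 - Real.exp (-1)) * (lam * Z i ω) := by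
      intro ω
      have ht0 : 0 ≤ lam * Z i ω := mul_nonneg hlampos.le (hZ0 i ω)
      have ht1 : lam * Z i ω ≤ 1 := by
        rw [hlamdef, div_mul_eq_mul_div, one_mul, div_le_one hc2pos]
        exact hZc i ω
      have := exp_le_lin (lam * Z i ω) ht0 ht1
      simpa only [hgdef] using this
    have hIrhs : Integrable (fun ω => 1 - (1 - Real.exp (-1)) * (lam * Z i ω)) μ :=
      (integrable_const 1).sub (((hZint i).const_mul lam).const_mul _)
    have hub := integral_mono (hgint i) hIrhs hptw
    rw [integral_sub (integrable_const 1) (((hZint i).const_mul lam).const_mul _),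
      integral_const, probReal_univ, smul_eq_mul, mul_one,
      integral_const_mul, integral_const_mul] at hub
    have h2 : 1 - (1 - Real.exp (-1)) * (lam * ∫ ω, Z i ω ∂μ) ≤ 1 - beta := by
      rw [hbetadef]
      have h3 : lam * mlow ≤ lam * ∫ ω, Z i ω ∂μ :=
        mul_le_mul_of_nonneg_left (hEZ i) hlampos.le
      have h4 : (0:ℝ) ≤ 1 - Real.exp (-1) := by linarith
      exact sub_le_sub_left (mul_le_mul_of_nonneg_left h3 h4) 1
    have h3 : 1 - beta ≤ Real.exp (-beta) := by
      have := Real.add_one_le_exp (-beta); linarith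
    linarith
  -- product structure
  set G : (Fin n → ℝ) → ℝ :=
    fun u => Real.exp (-(lam * min ((∑ j, x' j * u j) ^ 2) c2)) with hGdef
  have hGmeas : Measurable G := by
    have h1 : Measurable fun u : Fin n → ℝ => ∑ j, x' j * u j :=
      Finset.measurable_sum _ fun j _ => (measurable_pi_apply j).const_mul _
    exact ((((h1.pow_const 2).min measurable_const).const_mul lam).neg).exp
  have hfact : ∀ s : Finset (Fin N),
      (∫ ω, ∏ i ∈ s, g i ω ∂μ) = ∏ i ∈ s, ∫ ω, g i ω ∂μ := by
    intro s
    induction s using Finset.induction_on with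
    | empty => simp
    | insert _ _ ha =>
        rename_i a s ih
        simp only [Finset.prod_insert ha]
        have hmem1 : ∀ j : Fin n,
            ((a, j) : Fin N × Fin n) ∈ ({a} : Finset (Fin N)) ×ˢ Finset.univ :=
          fun j => Finset.mem_product.mpr ⟨Finset.mem_singleton_self a, Finset.mem_univ j⟩
        have hmem2 : ∀ (i : {i // i ∈ s}) (j : Fin n),
            ((i.1, j) : Fin N × Fin n) ∈ s ×ˢ Finset.univ :=
          fun i j => Finset.mem_product.mpr ⟨i.2, Finset.mem_univ j⟩
        have hdisj : Disjoint (({a} : Finset (Fin N)) ×ˢ (Finset.univ : Finset (Fin n)))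
            (s ×ˢ Finset.univ) := by
          rw [Finset.disjoint_left]
          rintro ⟨i, j⟩ h1 h2
          rw [Finset.mem_product, Finset.mem_singleton] at h1
          rw [Finset.mem_product] at h2
          exact ha (h1.1 ▸ h2.1)
        have hbig := hindep.indepFun_finset _ _ hdisj (fun q => hmeas q.1 q.2)
        have h1m : Measurable (fun v : (↥(({a} : Finset (Fin N)) ×ˢ (Finset.univ : Finset (Fin n)))) → ℝ =>
            G fun j => v ⟨(a, j), hmem1 j⟩) :=
          hGmeas.comp (measurable_pi_lambda _ fun j => measurable_pi_apply _)
        have h2m : Measurable (fun v : (↥(s ×ˢ (Finset.univ : Finset (Fin n)))) → ℝ =>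
            ∏ i ∈ s.attach, G fun j => v ⟨(i.1, j), hmem2 i j⟩) :=
          Finset.measurable_prod _ fun i _ =>
            hGmeas.comp (measurable_pi_lambda _ fun j => measurable_pi_apply _)
        have h3 := hbig.comp h1m h2m
        have e1 : ((fun v : (↥(({a} : Finset (Fin N)) ×ˢ (Finset.univ : Finset (Fin n)))) → ℝ =>
            G fun j => v ⟨(a, j), hmem1 j⟩) ∘
            (fun ω (q : ↥(({a} : Finset (Fin N)) ×ˢ (Finset.univ : Finset (Fin n)))) =>
              ξ (q : Fin N × Fin n).1 (q : Fin N × Fin n).2 ω)) = g a := by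
          funext ω; rfl
        have e2 : ((fun v : (↥(s ×ˢ (Finset.univ : Finset (Fin n)))) → ℝ =>
            ∏ i ∈ s.attach, G fun j => v ⟨(i.1, j), hmem2 i j⟩) ∘
            (fun ω (q : ↥(s ×ˢ (Finset.univ : Finset (Fin n)))) =>
              ξ (q : Fin N × Fin n).1 (q : Fin N × Fin n).2 ω))
            = fun ω => ∏ i ∈ s, g i ω := by
          funext ω
          exact Finset.prod_attach s (fun i => g i ω)
        rw [e1, e2] at h3
        have hpm : Measurable (fun ω => ∏ i ∈ s, g i ω) :=
          Finset.measurable_prod _ fun i _ => hgmeas i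
        have hmul := h3.integral_fun_mul_eq_mul_integral (hgmeas a).aestronglyMeasurable
          hpm.aestronglyMeasurable
        rw [hmul, ih]
  -- event inclusion
  have hsub : {ω | ‖(EuclideanSpace.equiv (Fin N) ℝ).symm
        (Matrix.mulVec (fun i j => ξ i j ω) x')‖
        < min (Real.sqrt eps) (1/2) * Real.sqrt N}
      ⊆ {ω | Real.exp (-(lam * (eps * N))) ≤ ∏ i, g i ω} := by
    intro ω hω
    simp only [Set.mem_setOf_eq] at hω ⊢
    have hnorm : ‖(EuclideanSpace.equiv (Fin N) ℝ).symm
        (Matrix.mulVec (fun i j => ξ i j ω) x')‖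
        = Real.sqrt (∑ i, (Matrix.mulVec (fun i j => ξ i j ω) x' i) ^ 2) := by
      rw [EuclideanSpace.norm_eq]
      congr 1
      refine Finset.sum_congr rfl fun i _ => ?_
      rw [Real.norm_eq_abs, sq_abs]
      rfl
    have hmv : ∀ i, Matrix.mulVec (fun i j => ξ i j ω) x' i = Y i ω := by
      intro i
      simp only [Matrix.mulVec, dotProduct, hYdef]
      exact Finset.sum_congr rfl fun j _ => mul_comm _ _
    rw [hnorm] at hω
    have hω' : Real.sqrt (∑ i, Y i ω ^ 2) < min (Real.sqrt eps) (1/2) * Real.sqrt N := by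
      have : (∑ i, (Matrix.mulVec (fun i j => ξ i j ω) x' i) ^ 2) = ∑ i, Y i ω ^ 2 :=
        Finset.sum_congr rfl fun i _ => by rw [hmv i]
      rwa [this] at hω
    have hS0 : 0 ≤ ∑ i, Y i ω ^ 2 := Finset.sum_nonneg fun i _ => sq_nonneg _
    have hμ₁nn : 0 ≤ min (Real.sqrt eps) (1/2) :=
      le_min (Real.sqrt_nonneg _) (by norm_num)
    have hsq : (∑ i, Y i ω ^ 2) < eps * N := by
      have h2 : Real.sqrt (∑ i, Y i ω ^ 2) ^ 2
          < (min (Real.sqrt eps) (1/2) * Real.sqrt N) ^ 2 := by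
        apply pow_lt_pow_left₀ hω' (Real.sqrt_nonneg _)
        norm_num
      rw [Real.sq_sqrt hS0, mul_pow, Real.sq_sqrt (Nat.cast_nonneg N)] at h2
      have h3 : (min (Real.sqrt eps) (1/2)) ^ 2 ≤ eps := by
        calc (min (Real.sqrt eps) (1/2)) ^ 2 ≤ Real.sqrt eps ^ 2 :=
              pow_le_pow_left₀ hμ₁nn (min_le_left _ _) 2
          _ = eps := Real.sq_sqrt hepspos.le
      calc (∑ i, Y i ω ^ 2) < (min (Real.sqrt eps) (1/2)) ^ 2 * N := h2
        _ ≤ eps * N := mul_le_mul_of_nonneg_right h3 (Nat.cast_nonneg N)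
    have hZsum : (∑ i, Z i ω) ≤ ∑ i, Y i ω ^ 2 :=
      Finset.sum_le_sum fun i _ => min_le_left _ _
    have hprodeq : (∏ i, g i ω) = Real.exp (-(lam * ∑ i, Z i ω)) := by
      rw [← Real.exp_sum]
      congr 1
      rw [Finset.mul_sum, ← Finset.sum_neg_distrib]
    rw [hprodeq]
    apply Real.exp_le_exp.2
    have : lam * (∑ i, Z i ω) ≤ lam * (eps * N) :=
      mul_le_mul_of_nonneg_left (le_of_lt (lt_of_le_of_lt hZsum hsq)) hlampos.le
    linarith
  -- Markov / Chernoff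
  have hpm : Measurable (fun ω => ∏ i, g i ω) :=
    Finset.measurable_prod _ fun i _ => hgmeas i
  have hIprodall : Integrable (fun ω => ∏ i, g i ω) μ := by
    refine (integrable_const (1:ℝ)).mono' hpm.aestronglyMeasurable ?_
    filter_upwards with ω
    rw [Real.norm_eq_abs, abs_of_nonneg (Finset.prod_nonneg fun i _ => (hg0 i ω).le)]
    exact Finset.prod_le_one (fun i _ => (hg0 i ω).le) (fun i _ => hg1 i ω)
  have hmarkov := mul_meas_ge_le_integral_of_nonneg
    (Filter.Eventually.of_forall fun ω => Finset.prod_nonneg fun i _ => (hg0 i ω).le)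
    hIprodall (Real.exp (-(lam * (eps * N))))
  have hmono : (μ {ω | ‖(EuclideanSpace.equiv (Fin N) ℝ).symm
        (Matrix.mulVec (fun i j => ξ i j ω) x')‖
        < min (Real.sqrt eps) (1/2) * Real.sqrt N}).toReal
      ≤ (μ {ω | Real.exp (-(lam * (eps * N))) ≤ ∏ i, g i ω}).toReal :=
    ENNReal.toReal_mono (measure_ne_top μ _) (measure_mono hsub)
  have hfinal : (μ {ω | ‖(EuclideanSpace.equiv (Fin N) ℝ).symm
        (Matrix.mulVec (fun i j => ξ i j ω) x')‖
        < min (Real.sqrt eps) (1/2) * Real.sqrt N}).toReal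
      ≤ Real.exp (lam * (eps * N)) * ∫ ω, ∏ i, g i ω ∂μ := by
    have hpos : 0 < Real.exp (-(lam * (eps * N))) := Real.exp_pos _
    have h1 : (μ {ω | Real.exp (-(lam * (eps * N))) ≤ ∏ i, g i ω}).toReal
        ≤ Real.exp (lam * (eps * N)) * ∫ ω, ∏ i, g i ω ∂μ := by
      have h2 : Real.exp (lam * (eps * N)) * (Real.exp (-(lam * (eps * N)))
          * (μ {ω | Real.exp (-(lam * (eps * N))) ≤ ∏ i, g i ω}).toReal)
          ≤ Real.exp (lam * (eps * N)) * ∫ ω, ∏ i, g i ω ∂μ :=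
        mul_le_mul_of_nonneg_left hmarkov (Real.exp_pos _).le
      rwa [← mul_assoc, ← Real.exp_add, add_neg_cancel, Real.exp_zero, one_mul] at h2
    exact le_trans hmono h1
  have hprodbound : (∫ ω, ∏ i, g i ω ∂μ) ≤ Real.exp (-beta) ^ N := by
    rw [hfact Finset.univ]
    calc (∏ i, ∫ ω, g i ω ∂μ) ≤ ∏ _i : Fin N, Real.exp (-beta) :=
          Finset.prod_le_prod (fun i _ => integral_nonneg fun ω => (hg0 i ω).le)
            (fun i _ => hgle i)
      _ = Real.exp (-beta) ^ N := by
          rw [Finset.prod_const, Finset.card_univ, Fintype.card_fin]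
  calc (μ {ω | ‖(EuclideanSpace.equiv (Fin N) ℝ).symm
        (Matrix.mulVec (fun i j => ξ i j ω) x')‖
        < min (Real.sqrt eps) (1/2) * Real.sqrt N}).toReal
      ≤ Real.exp (lam * (eps * N)) * ∫ ω, ∏ i, g i ω ∂μ := hfinal
    _ ≤ Real.exp (lam * (eps * N)) * Real.exp (-beta) ^ N := by
        apply mul_le_mul_of_nonneg_left hprodbound (Real.exp_pos _).le
    _ = (Real.exp (lam * eps) * Real.exp (-beta)) ^ N := by
        rw [mul_pow,
          show Real.exp (lam * (eps * (N:ℝ))) = Real.exp (lam*eps) ^ N from by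
            rw [← Real.exp_nat_mul, mul_comm ((N:ℝ)) (lam*eps), mul_assoc]]
    _ = Real.exp (-(beta/2)) ^ N := by
        rw [← Real.exp_add, hlameps]
        congr 2
        linarith
end

section
/- Let α > 0, θ₂ ≥ θ₁ > 0, and let ξ be a random variable with θ₁ p^{1/α} ≤ (E|ξ|^p)^{1/p} ≤ θ₂ p^{1/α} for all p ≥ 2. Then there exist constants c₁, c₂ > 0 depending only on θ₁, θ₂ and α such that c₁·e^{−t^α/c₁} ≤ P{|ξ| ≥ t} ≤ c₂·e^{−t^α/c₂} for all t ≥ 0. -/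
open MeasureTheory Real

section Aux
variable {Ω : Type} [MeasurableSpace Ω] {μ : Measure Ω}

lemma aux_integrable {ξ : Ω → ℝ} {p θ : ℝ} (hp : 0 < p) (hθ : 0 < θ)
    (h : θ ≤ (∫ ω, |ξ ω| ^ p ∂μ) ^ (1 / p)) :
    Integrable (fun ω => |ξ ω| ^ p) μ := by
  by_contra hni
  rw [integral_undef hni, Real.zero_rpow (one_div_ne_zero hp.ne')] at h
  linarith

lemma aux_moment_le {ξ : Ω → ℝ} {p C : ℝ} (hp : 0 < p) (hC : 0 ≤ C)
    (h : (∫ ω, |ξ ω| ^ p ∂μ) ^ (1 / p) ≤ C) :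
    (∫ ω, |ξ ω| ^ p ∂μ) ≤ C ^ p := by
  have hM : 0 ≤ ∫ ω, |ξ ω| ^ p ∂μ :=
    integral_nonneg fun ω => Real.rpow_nonneg (abs_nonneg _) _
  have hid : ((∫ ω, |ξ ω| ^ p ∂μ) ^ (1 / p)) ^ p = ∫ ω, |ξ ω| ^ p ∂μ := by
    rw [← Real.rpow_mul hM, one_div_mul_cancel hp.ne', Real.rpow_one]
  calc (∫ ω, |ξ ω| ^ p ∂μ) = ((∫ ω, |ξ ω| ^ p ∂μ) ^ (1 / p)) ^ p := hid.symm
    _ ≤ C ^ p := Real.rpow_le_rpow (Real.rpow_nonneg hM _) h hp.le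

lemma aux_moment_ge {ξ : Ω → ℝ} {p θ : ℝ} (hp : 0 < p) (hθ : 0 ≤ θ)
    (h : θ ≤ (∫ ω, |ξ ω| ^ p ∂μ) ^ (1 / p)) :
    θ ^ p ≤ (∫ ω, |ξ ω| ^ p ∂μ) := by
  have hM : 0 ≤ ∫ ω, |ξ ω| ^ p ∂μ :=
    integral_nonneg fun ω => Real.rpow_nonneg (abs_nonneg _) _
  have hid : ((∫ ω, |ξ ω| ^ p ∂μ) ^ (1 / p)) ^ p = ∫ ω, |ξ ω| ^ p ∂μ := by
    rw [← Real.rpow_mul hM, one_div_mul_cancel hp.ne', Real.rpow_one]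
  calc θ ^ p ≤ ((∫ ω, |ξ ω| ^ p ∂μ) ^ (1 / p)) ^ p := Real.rpow_le_rpow hθ h hp.le
    _ = _ := hid

lemma aux_CS [IsFiniteMeasure μ] {f : Ω → ℝ} (hf : Measurable f) (hfn : ∀ ω, 0 ≤ f ω)
    {A : Set Ω} (hA : MeasurableSet A) (hsq : Integrable (fun ω => f ω ^ 2) μ) :
    ∫ ω in A, f ω ∂μ ≤ (∫ ω, f ω ^ 2 ∂μ) ^ ((1:ℝ)/2) * ((μ A).toReal) ^ ((1:ℝ)/2) := by
  have hconj : Real.HolderConjugate 2 2 := Real.holderConjugate_iff.mpr ⟨one_lt_two, by norm_num⟩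
  have h2 : (ENNReal.ofReal 2) = (2 : ENNReal) := by norm_num
  have hmemf : MemLp f (ENNReal.ofReal 2) μ := by
    rw [h2]
    exact (memLp_two_iff_integrable_sq hf.aestronglyMeasurable).2 hsq
  have hmemg : MemLp (A.indicator (fun _ => (1:ℝ))) (ENNReal.ofReal 2) μ :=
    (memLp_const 1).indicator hA
  have h := integral_mul_le_Lp_mul_Lq_of_nonneg hconj (ae_of_all _ hfn)
    (ae_of_all _ fun ω => Set.indicator_nonneg (fun _ _ => zero_le_one) ω) hmemf hmemg
  have h1 : ∫ ω, f ω * A.indicator (fun _ => (1:ℝ)) ω ∂μ = ∫ ω in A, f ω ∂μ := by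
    rw [← integral_indicator hA]
    congr 1
    ext ω
    by_cases hω : ω ∈ A <;> simp [Set.indicator_apply, hω]
  have h2' : ∫ ω, f ω ^ (2:ℝ) ∂μ = ∫ ω, f ω ^ 2 ∂μ := by
    congr 1; ext ω; rw [Real.rpow_two]
  have h3 : ∫ ω, A.indicator (fun _ => (1:ℝ)) ω ^ (2:ℝ) ∂μ = (μ A).toReal := by
    have : ∀ ω, A.indicator (fun _ => (1:ℝ)) ω ^ (2:ℝ) = A.indicator (fun _ => (1:ℝ)) ω := by
      intro ω
      by_cases hω : ω ∈ A <;> simp [Set.indicator_apply, hω]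
    simp_rw [this]
    rw [integral_indicator_const (1:ℝ) hA, smul_eq_mul, mul_one]; rfl
  rw [h1, h2', h3] at h
  exact h

end Aux

set_option maxHeartbeats 1600000 in
theorem alphaExp_tail_bounds (α θ₁ θ₂ : ℝ) (hα : 0 < α) (hθ₁ : 0 < θ₁) (hθ : θ₁ ≤ θ₂) :
    ∃ c₁ c₂ : ℝ, 0 < c₁ ∧ 0 < c₂ ∧
      ∀ (Ω : Type) (_ : MeasurableSpace Ω) (μ : Measure Ω), IsProbabilityMeasure μ →
      ∀ ξ : Ω → ℝ, Measurable ξ →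
        (∀ p : ℝ, 2 ≤ p →
          θ₁ * p ^ (1 / α) ≤ (∫ ω, |ξ ω| ^ p ∂μ) ^ (1 / p) ∧
          (∫ ω, |ξ ω| ^ p ∂μ) ^ (1 / p) ≤ θ₂ * p ^ (1 / α)) →
      ∀ t : ℝ, 0 ≤ t →
        c₁ * Real.exp (-t ^ α / c₁) ≤ (μ {ω | t ≤ |ξ ω|}).toReal ∧
        (μ {ω | t ≤ |ξ ω|}).toReal ≤ c₂ * Real.exp (-t ^ α / c₂) := by
  have hθ₂ : 0 < θ₂ := lt_of_lt_of_le hθ₁ hθ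
  set A0 := Real.exp 1 * θ₂ ^ α with hA0def
  have hA0 : 0 < A0 := mul_pos (Real.exp_pos 1) (Real.rpow_pos_of_pos hθ₂ α)
  set c₂ := Real.exp 1 + 2 * A0 + α * A0 with hc₂def
  have hc₂ : 0 < c₂ := by positivity
  have hc₂e : Real.exp 1 ≤ c₂ := by nlinarith [mul_pos hα hA0]
  have hc₂1 : (1:ℝ) ≤ c₂ := le_trans (Real.one_le_exp zero_le_one) hc₂e
  have h2a : (1:ℝ) < 2 ^ (1/α) :=
    (Real.one_lt_rpow_iff_of_pos two_pos).2 (Or.inl ⟨one_lt_two, by positivity⟩)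
  set r := θ₁ / (θ₂ * 2 ^ (1/α)) with hrdef
  have hden : 0 < θ₂ * 2 ^ (1/α) := mul_pos hθ₂ (by positivity)
  have hr0 : 0 < r := div_pos hθ₁ hden
  have hr1 : r < 1 := by rw [hrdef, div_lt_one hden]; nlinarith
  set L := -Real.log r with hLdef
  have hL : 0 < L := neg_pos.2 (Real.log_neg hr0 hr1)
  set K := (2*L) * (2/θ₁) ^ α with hKdef
  have hK : 0 < K := mul_pos (by linarith) (Real.rpow_pos_of_pos (by positivity) _)
  set c₁ := min ((1/4) * Real.exp (-(4*L))) (1/K) with hc₁def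
  have hc₁ : 0 < c₁ := lt_min (by positivity) (by positivity)
  refine ⟨c₁, c₂, hc₁, hc₂, ?_⟩
  intro Ω mΩ μ hprob ξ hmeas hmom t ht
  have hle1 : ∀ S : Set Ω, (μ S).toReal ≤ 1 := fun S => by
    calc (μ S).toReal ≤ (μ Set.univ).toReal :=
          ENNReal.toReal_mono (measure_ne_top _ _) (measure_mono (Set.subset_univ _))
      _ = 1 := by simp
  -- key lower tail estimate
  have hkey : ∀ q : ℝ, 2 ≤ q →
      (1/4) * Real.exp (-(2*L)*q) ≤ (μ {ω | θ₁/2 * q^(1/α) ≤ |ξ ω|}).toReal := by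
    intro q hq2
    have hq0 : (0:ℝ) < q := by linarith
    obtain ⟨hlq, huq⟩ := hmom q hq2
    obtain ⟨hl2q, hu2q⟩ := hmom (2*q) (by linarith)
    have hintq : Integrable (fun ω => |ξ ω| ^ q) μ :=
      aux_integrable hq0 (mul_pos hθ₁ (Real.rpow_pos_of_pos hq0 _)) hlq
    have hint2q : Integrable (fun ω => |ξ ω| ^ (2*q)) μ :=
      aux_integrable (by linarith) (mul_pos hθ₁ (Real.rpow_pos_of_pos (by linarith) _)) hl2q
    set s := θ₁/2 * q^(1/α) with hsdef
    have hs0 : 0 < s := mul_pos (by linarith) (Real.rpow_pos_of_pos hq0 _)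
    set A' := {ω | s ≤ |ξ ω|} with hA'def
    have hA' : MeasurableSet A' := measurableSet_le measurable_const hmeas.abs
    set B := θ₁ * q^(1/α) with hBdef
    have hB0 : 0 < B := mul_pos hθ₁ (Real.rpow_pos_of_pos hq0 _)
    have hBq : B ^ q ≤ ∫ ω, |ξ ω|^q ∂μ := aux_moment_ge hq0 hB0.le hlq
    have hsplit : (∫ ω in A', |ξ ω|^q ∂μ) + ∫ ω in A'ᶜ, |ξ ω|^q ∂μ = ∫ ω, |ξ ω|^q ∂μ :=
      integral_add_compl hA' hintq
    have hsB : s = (1/2) * B := by rw [hsdef, hBdef]; ring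
    have hcompl : ∫ ω in A'ᶜ, |ξ ω|^q ∂μ ≤ (1/2) * B^q := by
      have h1 : ∫ ω in A'ᶜ, |ξ ω|^q ∂μ ≤ ∫ ω in A'ᶜ, s^q ∂μ := by
        refine setIntegral_mono_on hintq.integrableOn (integrableOn_const (measure_lt_top _ _).ne) hA'.compl ?_
        intro ω hω
        have : |ξ ω| < s := lt_of_not_ge hω
        exact Real.rpow_le_rpow (abs_nonneg _) this.le hq0.le
      have h2 : ∫ ω in A'ᶜ, s^q ∂μ = (μ A'ᶜ).toReal * s^q := by
        rw [setIntegral_const, smul_eq_mul]; rfl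
      have h3 : (μ A'ᶜ).toReal ≤ 1 := hle1 _
      have h4 : s^q = (1/2:ℝ)^q * B^q := by
        rw [hsB, Real.mul_rpow (by norm_num) hB0.le]
      have h5 : (1/2:ℝ)^q ≤ (1/2:ℝ) := by
        calc (1/2:ℝ)^q ≤ (1/2:ℝ)^(1:ℝ) :=
              Real.rpow_le_rpow_of_exponent_ge (by norm_num) (by norm_num) (by linarith)
          _ = 1/2 := Real.rpow_one _
      have hsq0 : (0:ℝ) ≤ s^q := Real.rpow_nonneg hs0.le _
      have hBq0 : (0:ℝ) ≤ B^q := Real.rpow_nonneg hB0.le _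
      calc ∫ ω in A'ᶜ, |ξ ω|^q ∂μ ≤ (μ A'ᶜ).toReal * s^q := h1.trans_eq h2
        _ ≤ 1 * s^q := mul_le_mul_of_nonneg_right h3 hsq0
        _ = (1/2:ℝ)^q * B^q := by rw [one_mul, h4]
        _ ≤ (1/2) * B^q := mul_le_mul_of_nonneg_right h5 hBq0
    have hmain : (1/2) * B^q ≤ ∫ ω in A', |ξ ω|^q ∂μ := by linarith
    have heq2 : ∀ ω, (|ξ ω|^q)^2 = |ξ ω|^(2*q) := by
      intro ω
      rw [← Real.rpow_two, ← Real.rpow_mul (abs_nonneg _)]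
      norm_num [mul_comm]
    have hsqint : Integrable (fun ω => (|ξ ω|^q)^2) μ :=
      hint2q.congr (ae_of_all _ fun ω => (heq2 ω).symm)
    have hCS := aux_CS ((Real.continuous_rpow_const hq0.le).measurable.comp hmeas.abs) (fun ω => Real.rpow_nonneg (abs_nonneg _) _) hA' hsqint
    have hM2eq : ∫ ω, (|ξ ω|^q)^2 ∂μ = ∫ ω, |ξ ω|^(2*q) ∂μ := by
      exact integral_congr_ae (ae_of_all _ heq2)
    have hM2 : ∫ ω, (|ξ ω|^q)^2 ∂μ ≤ (θ₂*(2*q)^(1/α))^(2*q) := by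
      rw [hM2eq]
      exact aux_moment_le (by linarith) (mul_nonneg hθ₂.le (Real.rpow_nonneg (by linarith) _)) hu2q
    set D := (θ₂*(2*q)^(1/α))^q with hDdef
    have hDbase : 0 < θ₂*(2*q)^(1/α) := mul_pos hθ₂ (Real.rpow_pos_of_pos (by linarith) _)
    have hD0 : 0 < D := Real.rpow_pos_of_pos hDbase _
    have hM2' : (∫ ω, (|ξ ω|^q)^2 ∂μ) ^ ((1:ℝ)/2) ≤ D := by
      have hnn : (0:ℝ) ≤ ∫ ω, (|ξ ω|^q)^2 ∂μ := integral_nonneg fun ω => sq_nonneg _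
      calc (∫ ω, (|ξ ω|^q)^2 ∂μ) ^ ((1:ℝ)/2)
          ≤ ((θ₂*(2*q)^(1/α))^(2*q)) ^ ((1:ℝ)/2) := Real.rpow_le_rpow hnn hM2 (by norm_num)
        _ = D := by
            rw [hDdef, ← Real.rpow_mul hDbase.le]
            congr 1
            ring
    have hchain : (1/2) * B^q ≤ D * ((μ A').toReal) ^ ((1:ℝ)/2) := by
      calc (1/2) * B^q ≤ ∫ ω in A', |ξ ω|^q ∂μ := hmain
        _ ≤ (∫ ω, (|ξ ω|^q)^2 ∂μ) ^ ((1:ℝ)/2) * ((μ A').toReal) ^ ((1:ℝ)/2) := hCS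
        _ ≤ D * ((μ A').toReal) ^ ((1:ℝ)/2) :=
            mul_le_mul_of_nonneg_right hM2' (Real.rpow_nonneg ENNReal.toReal_nonneg _)
    have hx : (1/2) * B^q / D ≤ ((μ A').toReal) ^ ((1:ℝ)/2) := by
      rw [div_le_iff₀ hD0]
      linarith [hchain, mul_comm D (((μ A').toReal) ^ ((1:ℝ)/2))]
    have hx0 : (0:ℝ) ≤ (1/2) * B^q / D :=
      div_nonneg (by positivity) hD0.le
    have hsq2 : ((1/2) * B^q / D)^2 ≤ (((μ A').toReal) ^ ((1:ℝ)/2))^2 :=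
      pow_le_pow_left₀ hx0 hx 2
    have hPid : (((μ A').toReal) ^ ((1:ℝ)/2))^2 = (μ A').toReal := by
      rw [← Real.rpow_two, ← Real.rpow_mul ENNReal.toReal_nonneg]
      norm_num
    have hBD : B^q / D = r^q := by
      rw [hDdef, ← Real.div_rpow hB0.le hDbase.le]
      congr 1
      rw [hBdef, hrdef, Real.mul_rpow (by norm_num : (0:ℝ) ≤ 2) hq0.le]
      have hqα : (0:ℝ) < q^(1/α) := Real.rpow_pos_of_pos hq0 _
      field_simp
    have hrq : ((1/2) * B^q / D)^2 = (1/4) * Real.exp (-(2*L)*q) := by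
      rw [mul_div_assoc, mul_pow, hBD]
      have : (r^q)^2 = Real.exp (-(2*L)*q) := by
        rw [Real.rpow_def_of_pos hr0, ← Real.exp_nat_mul]
        congr 1
        rw [hLdef]
        push_cast
        ring
      rw [this]
      norm_num
    rw [hrq, hPid] at hsq2
    exact hsq2
  constructor
  · -- lower bound
    set q := max 2 ((2*t/θ₁)^α) with hqdef
    have hq2 : (2:ℝ) ≤ q := le_max_left _ _
    have h1 := hkey q hq2
    have h2tθ : (0:ℝ) ≤ 2*t/θ₁ := by positivity
    have hts : t ≤ θ₁/2 * q^(1/α) := by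
      have hq1 : (2*t/θ₁)^α ≤ q := le_max_right _ _
      have h5 : 2*t/θ₁ ≤ q^(1/α) := by
        calc 2*t/θ₁ = ((2*t/θ₁)^α)^(1/α) := by
              rw [← Real.rpow_mul h2tθ, mul_one_div_cancel hα.ne', Real.rpow_one]
          _ ≤ q^(1/α) := Real.rpow_le_rpow (Real.rpow_nonneg h2tθ _) hq1 (by positivity)
      have h6 := mul_le_mul_of_nonneg_left h5 (by linarith : (0:ℝ) ≤ θ₁/2)
      rw [show θ₁/2 * (2*t/θ₁) = t from by field_simp] at h6
      exact h6
    have hsub : {ω | θ₁/2 * q^(1/α) ≤ |ξ ω|} ⊆ {ω | t ≤ |ξ ω|} :=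
      fun ω hω => le_trans hts hω
    have h2 : (μ {ω | θ₁/2 * q^(1/α) ≤ |ξ ω|}).toReal ≤ (μ {ω | t ≤ |ξ ω|}).toReal :=
      ENNReal.toReal_mono (measure_ne_top _ _) (measure_mono hsub)
    have hqle : q ≤ 2 + (2*t/θ₁)^α :=
      max_le (by linarith [Real.rpow_nonneg h2tθ α]) (by linarith)
    have h3 : (1/4) * Real.exp (-(2*L)*(2+(2*t/θ₁)^α)) ≤ (1/4) * Real.exp (-(2*L)*q) := by
      have hmm : (2*L)*q ≤ (2*L)*(2+(2*t/θ₁)^α) :=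
        mul_le_mul_of_nonneg_left hqle (by linarith)
      have hee : -(2*L)*(2+(2*t/θ₁)^α) ≤ -(2*L)*q := by linarith
      exact mul_le_mul_of_nonneg_left (Real.exp_le_exp.2 hee) (by norm_num)
    have hsplit2 : (2*t/θ₁)^α = (2/θ₁)^α * t^α := by
      rw [show 2*t/θ₁ = (2/θ₁)*t from by ring, Real.mul_rpow (by positivity) ht]
    have h4 : c₁ * Real.exp (-t^α/c₁) ≤ (1/4) * Real.exp (-(2*L)*(2+(2*t/θ₁)^α)) := by
      have hexp : -(2*L)*(2+(2*t/θ₁)^α) = -(4*L) + -(K * t^α) := by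
        rw [hsplit2, hKdef]; ring
      rw [hexp, Real.exp_add]
      have hc₁a : c₁ ≤ (1/4) * Real.exp (-(4*L)) := min_le_left _ _
      have hc₁b : c₁ ≤ 1/K := min_le_right _ _
      have hKc : K ≤ 1/c₁ := by
        rw [le_div_iff₀ hc₁]
        rw [le_div_iff₀ hK] at hc₁b
        linarith [hc₁b]
      have hexp2 : Real.exp (-t^α/c₁) ≤ Real.exp (-(K * t^α)) := by
        apply Real.exp_le_exp.2
        rw [neg_div, neg_le_neg_iff]
        calc K * t^α ≤ (1/c₁) * t^α :=
              mul_le_mul_of_nonneg_right hKc (Real.rpow_nonneg ht _)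
          _ = t^α/c₁ := by ring
      calc c₁ * Real.exp (-t^α/c₁) ≤ ((1/4) * Real.exp (-(4*L))) * Real.exp (-(K * t^α)) :=
            mul_le_mul hc₁a hexp2 (Real.exp_pos _).le (by positivity)
        _ = 1/4 * (Real.exp (-(4*L)) * Real.exp (-(K * t^α))) := by ring
    linarith
  · -- upper bound
    by_cases hcase : t ^ α ≤ 2 * A0
    · have h2A0c : 2*A0 ≤ c₂ := by nlinarith [Real.exp_pos 1, mul_pos hα hA0]
      have he : Real.exp (-1) ≤ Real.exp (-t^α / c₂) := by
        apply Real.exp_le_exp.2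
        rw [neg_div]
        apply neg_le_neg
        rw [div_le_one hc₂]
        linarith
      have h1 : (1:ℝ) ≤ c₂ * Real.exp (-t^α / c₂) := by
        calc (1:ℝ) = Real.exp 1 * Real.exp (-1) := by rw [← Real.exp_add]; norm_num
          _ ≤ c₂ * Real.exp (-t^α/c₂) := mul_le_mul hc₂e he (Real.exp_pos _).le hc₂.le
      linarith [hle1 {ω | t ≤ |ξ ω|}]
    · push_neg at hcase
      have ht' : 0 < t := by
        rcases ht.lt_or_eq with h | h
        · exact h
        · exfalso; rw [← h, Real.zero_rpow hα.ne'] at hcase; nlinarith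
      set p := t ^ α / A0 with hpdef
      have hp2 : (2:ℝ) ≤ p := by rw [hpdef, le_div_iff₀ hA0]; linarith
      have hp0 : (0:ℝ) < p := by linarith
      obtain ⟨hlow, hupp⟩ := hmom p hp2
      have hint : Integrable (fun ω => |ξ ω| ^ p) μ :=
        aux_integrable hp0 (mul_pos hθ₁ (Real.rpow_pos_of_pos hp0 _)) hlow
      have hMle : (∫ ω, |ξ ω| ^ p ∂μ) ≤ (θ₂ * p ^ (1/α)) ^ p :=
        aux_moment_le hp0 (mul_nonneg hθ₂.le (Real.rpow_nonneg hp0.le _)) hupp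
      have hmark := mul_meas_ge_le_integral_of_nonneg (μ := μ)
        (ae_of_all _ fun ω => Real.rpow_nonneg (abs_nonneg (ξ ω)) p) hint (t^p)
      have hsub : {ω | t ≤ |ξ ω|} ⊆ {ω | t^p ≤ |ξ ω|^p} :=
        fun ω hω => Real.rpow_le_rpow ht hω hp0.le
      have hmark2 : t^p * (μ {ω | t ≤ |ξ ω|}).toReal ≤ (θ₂ * p ^ (1/α)) ^ p := by
        refine le_trans (le_trans ?_ hmark) hMle
        exact mul_le_mul_of_nonneg_left
          (ENNReal.toReal_mono (measure_ne_top _ _) (measure_mono hsub))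
          (Real.rpow_nonneg ht p)
      have hcomp : θ₂ * p ^ (1/α) = t * Real.exp (-(1/α)) := by
        rw [hpdef, Real.div_rpow (Real.rpow_nonneg ht α) hA0.le,
          ← Real.rpow_mul ht, mul_one_div_cancel hα.ne', Real.rpow_one, hA0def,
          Real.mul_rpow (Real.exp_pos 1).le (Real.rpow_nonneg hθ₂.le α),
          ← Real.rpow_mul hθ₂.le, mul_one_div_cancel hα.ne', Real.rpow_one,
          Real.exp_one_rpow, Real.exp_neg]
        field_simp
      have hPle : (μ {ω | t ≤ |ξ ω|}).toReal ≤ Real.exp (-(t^α/(α*A0))) := by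
        have htp : 0 < t ^ p := Real.rpow_pos_of_pos ht' p
        rw [hcomp, Real.mul_rpow ht'.le (Real.exp_pos _).le] at hmark2
        have hE : Real.exp (-(1/α)) ^ p = Real.exp (-(t^α/(α*A0))) := by
          rw [← Real.exp_one_rpow (-(1/α)), ← Real.rpow_mul (Real.exp_pos 1).le,
            Real.exp_one_rpow]
          congr 1
          rw [hpdef]
          field_simp
        rw [hE] at hmark2
        exact le_of_mul_le_mul_left hmark2 htp
      have hfinal : Real.exp (-(t^α/(α*A0))) ≤ c₂ * Real.exp (-t^α/c₂) := by
        have hαA0 : 0 < α * A0 := mul_pos hα hA0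
        have hαA0c : α * A0 ≤ c₂ := by nlinarith [Real.exp_pos 1, hA0]
        have h1 : t^α/c₂ ≤ t^α/(α*A0) :=
          div_le_div_of_nonneg_left (Real.rpow_nonneg ht α) hαA0 hαA0c
        calc Real.exp (-(t^α/(α*A0))) = 1 * Real.exp (-(t^α/(α*A0))) := (one_mul _).symm
          _ ≤ c₂ * Real.exp (-t^α/c₂) := by
              apply mul_le_mul hc₂1 _ (Real.exp_pos _).le hc₂.le
              rw [neg_div]
              exact Real.exp_le_exp.2 (neg_le_neg h1)
      linarith
end
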